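/- Let V and C be finite-dimensional vector spaces over a field with dim C = 2. Let ∂ : V → C be a surjective linear map, M : C → V an injective linear map, and set T := id_V + M ∘ ∂ and S := id_C + ∂ ∘ M. Assume S ≠ id_C and (S − id_C)² = 0 (i.e. S is unipotent with a single Jordan block of size 2). Then N := T − id_V satisfies N³ = 0, N² ≠ 0, rank N = 2 and rank N² = 1; equivalently, T is unipotent with exactly one Jordan block of size 3 and dim V − 3 Jordan blocks of size 1. -/
import Mathlib


/-- The linear-algebra step establishing Proposition 5.1(ii) of the paper:
if `dim C = 2`, `bnd` is surjective, `M` is injective, `S = id + bnd ∘ M` is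
unipotent nontrivial with `(S - id)^2 = 0`, then `N = T - id` for
`T = id + M ∘ bnd` satisfies `N^3 = 0`, `N^2 ≠ 0`, `rank N = 2`, `rank N^2 = 1`,
i.e. `T` is unipotent with one Jordan block of size 3 and `dim V - 3` blocks of size 1. -/
theorem monodromy_fano_type {K V C : Type*} [Field K]
    [AddCommGroup V] [Module K V] [AddCommGroup C] [Module K C]
    [FiniteDimensional K V] [FiniteDimensional K C]
    (hC : Module.finrank K C = 2)
    (bnd : V →ₗ[K] C) (hbnd : Function.Surjective bnd)
    (M : C →ₗ[K] V) (hM : Function.Injective M)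
    (T : V →ₗ[K] V) (S : C →ₗ[K] C)
    (hT : T = LinearMap.id + M ∘ₗ bnd) (hS : S = LinearMap.id + bnd ∘ₗ M)
    (hS1 : S ≠ LinearMap.id) (hS2 : (S - LinearMap.id) ^ 2 = 0) :
    (T - LinearMap.id) ^ 3 = 0 ∧ (T - LinearMap.id) ^ 2 ≠ 0 ∧
    Module.finrank K (LinearMap.range (T - LinearMap.id)) = 2 ∧
    Module.finrank K (LinearMap.range ((T - LinearMap.id) ^ 2)) = 1 := by
  set A : C →ₗ[K] C := bnd ∘ₗ M with hA
  have hAS : S - LinearMap.id = A := by rw [hS]; abel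
  have hN : T - LinearMap.id = M ∘ₗ bnd := by rw [hT]; abel
  -- A ≠ 0
  have hA0 : A ≠ 0 := fun h => hS1 (by rw [← sub_eq_zero, hAS, h])
  -- A ∘ A = 0
  have hAA : A ∘ₗ A = 0 := by
    have : (S - LinearMap.id) ^ 2 = A ∘ₗ A := by
      rw [hAS, pow_two]; rfl
    rw [← this, hS2]
  -- N^2 = M ∘ A ∘ bnd
  have hN2 : (T - LinearMap.id) ^ 2 = M ∘ₗ (A ∘ₗ bnd) := by
    rw [pow_two, hN]; ext v; simp [hA]
  -- N^3 = 0
  have h3 : (T - LinearMap.id) ^ 3 = 0 := by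
    have : (T - LinearMap.id) ^ 3 = M ∘ₗ ((A ∘ₗ A) ∘ₗ bnd) := by
      rw [pow_succ, hN2, hN]; ext v; simp [hA]
    rw [this, hAA]; ext v; simp
  -- pick c with A c ≠ 0
  obtain ⟨c, hc⟩ : ∃ c, A c ≠ 0 := by
    by_contra h
    push_neg at h
    exact hA0 (LinearMap.ext fun c => h c)
  -- N^2 ≠ 0
  have h2ne : (T - LinearMap.id) ^ 2 ≠ 0 := by
    intro h
    obtain ⟨v, hv⟩ := hbnd c
    have : M (A (bnd v)) = 0 := by
      have := LinearMap.congr_fun h v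
      rw [hN2] at this; simpa using this
    rw [hv] at this
    exact hc (hM (by simpa using this))
  -- rank A = 1
  have hrk : Module.finrank K (LinearMap.range A) ≤ Module.finrank K (LinearMap.ker A) := by
    apply Submodule.finrank_mono
    intro x hx
    obtain ⟨y, rfl⟩ := hx
    simp [LinearMap.mem_ker, ← LinearMap.comp_apply, hAA]
  have hsum := LinearMap.finrank_range_add_finrank_ker A
  rw [hC] at hsum
  have hApos : 0 < Module.finrank K (LinearMap.range A) := by
    rw [Module.finrank_pos_iff_exists_ne_zero]
    exact ⟨⟨A c, LinearMap.mem_range_self A c⟩, fun h => hc (by simpa using congrArg Subtype.val h)⟩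
  have hArk : Module.finrank K (LinearMap.range A) = 1 := by omega
  -- rank N = 2
  have hrange1 : LinearMap.range (T - LinearMap.id) = Submodule.map M ⊤ := by
    rw [hN, LinearMap.range_comp, LinearMap.range_eq_top.mpr hbnd]
  have hr1 : Module.finrank K (LinearMap.range (T - LinearMap.id)) = 2 := by
    rw [hrange1, ← hC]
    exact ((Submodule.equivMapOfInjective M hM ⊤).symm.finrank_eq).trans (finrank_top K C)
  -- rank N^2 = 1
  have hrange2 : LinearMap.range ((T - LinearMap.id) ^ 2)
      = Submodule.map M (LinearMap.range A) := by
    rw [hN2, LinearMap.range_comp, LinearMap.range_comp,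
      LinearMap.range_eq_top.mpr hbnd, Submodule.map_top]
  have hr2 : Module.finrank K (LinearMap.range ((T - LinearMap.id) ^ 2)) = 1 := by
    rw [hrange2, ← hArk]
    exact (Submodule.equivMapOfInjective M hM (LinearMap.range A)).symm.finrank_eq
  exact ⟨h3, h2ne, hr1, hr2⟩
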